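/- Let x : ℝ → ℝ² be any twice differentiable curve with x(t) ≠ 0 for all t, and set N(t) = ẍ(t) + x(t)/|x(t)|³ ∈ ℝ². Define the components of the Laplace–Runge–Lenz vector A₁ = x₁ |ẋ|² − ẋ₁ (x₁ẋ₁ + x₂ẋ₂) − x₁/|x| and A₂ = x₂ |ẋ|² − ẋ₂ (x₁ẋ₁ + x₂ẋ₂) − x₂/|x|. Then dA₁/dt = −x₂ ẋ₂ N₁ + (2 x₁ ẋ₂ − ẋ₁ x₂) N₂ and dA₂/dt = (2 x₂ ẋ₁ − x₁ ẋ₂) N₁ − x₁ ẋ₁ N₂; that is, (−x₂ẋ₂, 2x₁ẋ₂ − ẋ₁x₂) and (2x₂ẋ₁ − x₁ẋ₂, −x₁ẋ₁) are the characteristics of the conservation laws of the two components of the LRL vector for the two-dimensional Kepler problem. -/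

import Mathlib

/-!
Differentiating `A = ‖ẋ‖² x - ⟪x, ẋ⟫ ẋ - x / ‖x‖` in any real inner product space and
substituting `ẍ = N - x / ‖x‖³`, every term carrying the Kepler force cancels against the
derivative of `-x / ‖x‖`, leaving `Ȧ = 2⟪ẋ, N⟫ x - ⟪x, ẋ⟫ N - ⟪x, N⟫ ẋ`, which is linear in `N`.
In the plane, the coordinates of this vector are the two claimed characteristics paired with `N`.
-/

open scoped RealInnerProductSpace

section

variable {E : Type*} [NormedAddCommGroup E] [InnerProductSpace ℝ E]

theorem HasDerivAt.norm {x : ℝ → E} {v : E} {t : ℝ} (hx : HasDerivAt x v t) (h0 : x t ≠ 0) :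
    HasDerivAt (fun s => ‖x s‖) (⟪x t, v⟫ / ‖x t‖) t := by
  have h := hx.norm_sq.sqrt (by positivity)
  simp only [Real.sqrt_sq (norm_nonneg _)] at h
  convert h using 1
  field_simp

noncomputable def laplaceRungeLenz (x v : E) : E :=
  ‖v‖ ^ 2 • x - ⟪x, v⟫ • v - ‖x‖⁻¹ • x

theorem hasDerivAt_laplaceRungeLenz {x v : ℝ → E} {N : E} {t : ℝ} (hx : HasDerivAt x (v t) t)
    (hv : HasDerivAt v (N - (‖x t‖ ^ 3)⁻¹ • x t) t) (h0 : x t ≠ 0) :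
    HasDerivAt (fun s => laplaceRungeLenz (x s) (v s))
      ((2 * ⟪v t, N⟫) • x t - ⟪x t, v t⟫ • N - ⟪x t, N⟫ • v t) t := by
  have hr : ‖x t‖ ≠ 0 := norm_ne_zero_iff.mpr h0
  refine (((hv.norm_sq.smul hx).sub ((hx.inner ℝ hv).smul hv)).sub
    (((hx.norm h0).inv hr).smul hx)).congr_deriv ?_
  simp only [inner_sub_right, inner_smul_right, real_inner_self_eq_norm_sq,
    real_inner_comm (x t) (v t), Pi.inv_apply]
  match_scalars <;> field_simp <;> ring

end

theorem laplaceRungeLenz_fin_two_apply (x v : EuclideanSpace ℝ (Fin 2)) (i : Fin 2) :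
    laplaceRungeLenz x v i =
      x i * (v 0 ^ 2 + v 1 ^ 2) - v i * (x 0 * v 0 + x 1 * v 1) - x i / ‖x‖ := by
  simp only [laplaceRungeLenz, EuclideanSpace.real_norm_sq_eq, PiLp.inner_apply, Fin.sum_univ_two,
    PiLp.sub_apply, PiLp.smul_apply, smul_eq_mul, RCLike.inner_apply, conj_trivial]
  ring

theorem laplaceRungeLenz_deriv_fin_two (x v N : EuclideanSpace ℝ (Fin 2)) :
    ((2 * ⟪v, N⟫) • x - ⟪x, v⟫ • N - ⟪x, N⟫ • v) 0 =
        -(x 1) * v 1 * N 0 + (2 * x 0 * v 1 - v 0 * x 1) * N 1 ∧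
      ((2 * ⟪v, N⟫) • x - ⟪x, v⟫ • N - ⟪x, N⟫ • v) 1 =
        (2 * x 1 * v 0 - x 0 * v 1) * N 0 - x 0 * v 0 * N 1 := by
  simp only [PiLp.inner_apply, Fin.sum_univ_two, PiLp.sub_apply, PiLp.smul_apply, smul_eq_mul,
    RCLike.inner_apply, conj_trivial]
  constructor <;> ring

/-- **Characteristics of the conservation laws of the Laplace–Runge–Lenz vector for the
two-dimensional Kepler problem.** For any twice differentiable curve `x : ℝ → ℝ²` with
`x(t) ≠ 0`, setting `N(t) = ẍ(t) + x(t)/|x(t)|³` and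
`A₁ = x₁|ẋ|² − ẋ₁(x₁ẋ₁ + x₂ẋ₂) − x₁/|x|`, `A₂ = x₂|ẋ|² − ẋ₂(x₁ẋ₁ + x₂ẋ₂) − x₂/|x|`,
one has `dA₁/dt = −x₂ẋ₂ N₁ + (2x₁ẋ₂ − ẋ₁x₂) N₂` and
`dA₂/dt = (2x₂ẋ₁ − x₁ẋ₂) N₁ − x₁ẋ₁ N₂`. -/
theorem kepler2d_LRL_characteristics (x : ℝ → EuclideanSpace ℝ (Fin 2))
    (hx1 : ∀ t, DifferentiableAt ℝ x t)
    (hx2 : ∀ t, DifferentiableAt ℝ (deriv x) t)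
    (hx0 : ∀ t, x t ≠ 0)
    (N : ℝ → EuclideanSpace ℝ (Fin 2))
    (hN : ∀ t, N t = deriv (deriv x) t + (‖x t‖ ^ 3)⁻¹ • x t) :
    ∀ t : ℝ,
      (deriv (fun s => x s 0 * ((deriv x s 0) ^ 2 + (deriv x s 1) ^ 2)
          - deriv x s 0 * (x s 0 * deriv x s 0 + x s 1 * deriv x s 1)
          - x s 0 / ‖x s‖) t =
        -(x t 1) * deriv x t 1 * N t 0
          + (2 * x t 0 * deriv x t 1 - deriv x t 0 * x t 1) * N t 1) ∧
      (deriv (fun s => x s 1 * ((deriv x s 0) ^ 2 + (deriv x s 1) ^ 2)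
          - deriv x s 1 * (x s 0 * deriv x s 0 + x s 1 * deriv x s 1)
          - x s 1 / ‖x s‖) t =
        (2 * x t 1 * deriv x t 0 - x t 0 * deriv x t 1) * N t 0
          - x t 0 * deriv x t 0 * N t 1) := by
  intro t
  have hacc : deriv (deriv x) t = N t - (‖x t‖ ^ 3)⁻¹ • x t := eq_sub_of_add_eq (hN t).symm
  have hA := hasDerivAt_laplaceRungeLenz (hx1 t).hasDerivAt ((hx2 t).hasDerivAt.congr_deriv hacc)
    (hx0 t)
  have hAi (i : Fin 2) := (EuclideanSpace.proj i).hasFDerivAt.comp_hasDerivAt t hA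
  simp only [Function.comp_def, PiLp.proj_apply, laplaceRungeLenz_fin_two_apply] at hAi
  obtain ⟨h0, h1⟩ := laplaceRungeLenz_deriv_fin_two (x t) (deriv x t) (N t)
  exact ⟨(hAi 0).deriv.trans h0, (hAi 1).deriv.trans h1⟩
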